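/- Let P and P' be finite sets of points in the Euclidean plane ℝ² and let f : P → P' be a visibility isomorphism. Let L be a line, let k be the number of points of P on L and l the number of points of P not on L, and suppose k ≥ (l + 3)². Then no point of P' outside the image set f(P ∩ L) lies on the line spanned by f(P ∩ L); that is, if L' is the affine span of f(P ∩ L) (which is a line, since f(P ∩ L) is collinear and contains at least two points), then P' ∩ L' = f(P ∩ L). -/

import Mathlib

/-- The Euclidean plane ℝ². -/
abbrev Plane : Type := EuclideanSpace ℝ (Fin 2)

/-- Two points `p` and `q` are visible to each other with respect to a point set `P`
if they are distinct and no point of `P` lies strictly between them. -/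
def Visible (P : Set Plane) (p q : Plane) : Prop :=
  p ≠ q ∧ ∀ r ∈ P, ¬ Sbtw ℝ p r q

/-- A line in the plane: an affine subspace of dimension 1. -/
def IsLine (L : AffineSubspace ℝ Plane) : Prop :=
  Module.finrank ℝ L.direction = 1

/-- A visibility isomorphism between two point sets: a bijection of `P` onto `P'`
preserving the visibility relation in both directions. -/
def VisIso (P P' : Set Plane) (f : Plane → Plane) : Prop :=
  Set.BijOn f P P' ∧
    ∀ p ∈ P, ∀ q ∈ P, p ≠ q → (Visible P p q ↔ Visible P' (f p) (f q))

/-!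
Every point of `P ∩ L` sees at most `l + 2` points of `P` (at most two of them along `L`), hence
so does every point of `f(P ∩ L)` in `P'`. Seen from one such point, the other `k - 1 > (l + 2)²`
image points lie on at most `l + 2` rays through visible points, so more than `l + 2` of them lie
on one line; a point of `f(P ∩ L)` off that line would see all of them, so `f(P ∩ L)` is
collinear. A point `w ∈ P` off `L` sees all points of `P ∩ L` except those blocked by the other
`l - 1` points off `L`, so at least three; their images are visible from `f w`, and no three
points visible from a point lie on a line through it.
-/

open Set

section Affine

variable {k V P : Type*} [Field k] [AddCommGroup V] [Module k V] [AddTorsor V P]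

theorem collinear_of_subset_affineSpan {s t : Set P} (hs : Collinear k s)
    (ht : t ⊆ affineSpan k s) : Collinear k t := by
  rw [collinear_iff_rank_le_one] at hs ⊢
  refine le_trans (Submodule.rank_mono ?_) hs
  rw [← direction_affineSpan k s]
  exact vectorSpan_mono k ht

theorem AffineSubspace.mem_of_ne_of_mem_affineSpan_pair {s : AffineSubspace k P} {x z y y' : P}
    (hy : y ∈ line[k, x, z]) (hy' : y' ∈ line[k, x, z]) (hne : y ≠ y') (hys : y ∈ s)
    (hy's : y' ∈ s) : x ∈ s :=
  affineSpan_pair_le_of_mem_of_mem hys hy's <|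
    (collinear_insert_insert_of_mem_affineSpan_pair hy hy').mem_affineSpan_of_mem_of_ne
      (by simp) (by simp) (by simp) hne

end Affine

theorem IsLine.collinear {L : AffineSubspace ℝ Plane} (hL : IsLine L) :
    Collinear ℝ (L : Set Plane) := by
  rw [collinear_iff_finrank_le_one]
  exact hL.le

def visibleFrom (S : Set Plane) (x : Plane) : Set Plane :=
  {y ∈ S | Visible S x y}

section Visibility

variable {S : Set Plane} {x : Plane}

theorem visibleFrom_subset : visibleFrom S x ⊆ S := sep_subset _ _

theorem Visible.sbtw_of_collinear {y z : Plane} (hxy : Visible S x y) (hxz : Visible S x z)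
    (hy : y ∈ S) (hz : z ∈ S) (hyz : y ≠ z) (hcol : Collinear ℝ {x, y, z}) : Sbtw ℝ y x z := by
  rcases hcol.wbtw_or_wbtw_or_wbtw with h | h | h
  · exact absurd ⟨h, hxy.1.symm, hyz⟩ (hxz.2 y hy)
  · exact absurd ⟨h.symm, hxz.1.symm, hyz.symm⟩ (hxy.2 z hz)
  · exact ⟨h.symm, hxy.1, hxz.1⟩

theorem ncard_inter_visibleFrom_le_two {W : Set Plane} (hW : Collinear ℝ (insert x W)) :
    (W ∩ visibleFrom S x).ncard ≤ 2 := by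
  by_contra! h
  obtain ⟨a, b, c, ha, hb, hc, hab, hac, hbc⟩ :=
    (two_lt_ncard_iff (finite_of_ncard_pos (by omega))).1 h
  -- the middle one of three collinear visible points would hide an outer one from `x`
  have hmiddle : ∀ p ∈ W ∩ visibleFrom S x, ∀ q ∈ W ∩ visibleFrom S x, ∀ r ∈ W ∩ visibleFrom S x,
      p ≠ q → q ≠ r → ¬ Wbtw ℝ p q r := by
    rintro p ⟨hpW, hpS, hp⟩ q ⟨hqW, hqS, hq⟩ r ⟨-, -, hr⟩ hpq hqr hpqr
    have hpxq := hp.sbtw_of_collinear hq hpS hqS hpq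
      (hW.subset (insert_subset_insert (pair_subset hpW hqW)))
    exact hr.2 q hqS (Sbtw.trans_left_right ⟨hpqr, hpq.symm, hqr⟩ hpxq)
  have habc : Collinear ℝ {a, b, c} :=
    hW.subset ((insert_subset ha.1 (pair_subset hb.1 hc.1)).trans (subset_insert x W))
  rcases habc.wbtw_or_wbtw_or_wbtw with h | h | h
  · exact hmiddle a ha b hb c hc hab hbc h
  · exact hmiddle b hb c hc a ha hbc hac.symm h
  · exact hmiddle c hc a ha b hb hac.symm hab h

theorem exists_mem_visibleFrom_mem_affineSpan_pair (hS : S.Finite) {y : Plane} (hy : y ∈ S)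
    (hyx : y ≠ x) : ∃ z ∈ visibleFrom S x, y ∈ line[ℝ, x, z] := by
  obtain ⟨z, ⟨hzS, hxzy, hzx⟩, hmin⟩ := exists_min_image {w ∈ S | Wbtw ℝ x w y ∧ w ≠ x}
    (dist x) (hS.subset (sep_subset _ _)) ⟨y, hy, wbtw_self_right ℝ x y, hyx⟩
  refine ⟨z, ⟨hzS, hzx.symm, fun r hr hxrz => ?_⟩, hxzy.right_mem_affineSpan_of_left_ne hzx.symm⟩
  have hzr := hmin r ⟨hr, hxzy.trans_left hxrz.wbtw, hxrz.ne_left⟩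
  have := hxrz.wbtw.dist_add_dist
  have := dist_pos.2 hxrz.ne_right
  linarith

theorem ncard_visibleFrom_le_ncard_diff_add_two (hS : S.Finite) {L : Set Plane}
    (hL : Collinear ℝ L) (hx : x ∈ L) : (visibleFrom S x).ncard ≤ (S \ L).ncard + 2 := by
  have hsplit : visibleFrom S x ⊆ (S \ L) ∪ (L ∩ visibleFrom S x) := fun y hy => by
    by_cases hyL : y ∈ L
    · exact Or.inr ⟨hyL, hy⟩
    · exact Or.inl ⟨hy.1, hyL⟩
  calc (visibleFrom S x).ncard
      ≤ ((S \ L) ∪ (L ∩ visibleFrom S x)).ncard :=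
        ncard_le_ncard hsplit (hS.sdiff.union ((hS.subset visibleFrom_subset).inter_of_right L))
    _ ≤ (S \ L).ncard + (L ∩ visibleFrom S x).ncard := ncard_union_le _ _
    _ ≤ (S \ L).ncard + 2 := by
        gcongr
        exact ncard_inter_visibleFrom_le_two (by rwa [insert_eq_of_mem hx])

theorem ncard_le_ncard_visibleFrom_of_notMem (hS : S.Finite) {Y : Set Plane}
    {M : AffineSubspace ℝ Plane} (hYS : Y ⊆ S) (hYM : Y ⊆ M) (hx : x ∉ M) :
    Y.ncard ≤ (visibleFrom S x).ncard := by
  have hne : ∀ y ∈ Y, y ≠ x := fun y hy h => hx (h ▸ hYM hy)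
  choose! ray hray hmem using fun y (hy : y ∈ Y) =>
    exists_mem_visibleFrom_mem_affineSpan_pair hS (hYS hy) (hne y hy)
  refine ncard_le_ncard_of_injOn ray hray (fun y hy y' hy' h => ?_) (hS.subset visibleFrom_subset)
  by_contra hyy'
  exact hx (M.mem_of_ne_of_mem_affineSpan_pair (hmem y hy) (h ▸ hmem y' hy') hyy' (hYM hy)
    (hYM hy'))

theorem ncard_inter_add_one_le_ncard_inter_visibleFrom_add (hS : S.Finite) (hxS : x ∈ S)
    {L : AffineSubspace ℝ Plane} (hxL : x ∉ L) :
    (S ∩ L).ncard + 1 ≤ (S ∩ L ∩ visibleFrom S x).ncard + (S \ L).ncard := by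
  have hsplit := ncard_inter_add_ncard_sdiff_eq_ncard (S ∩ L) (visibleFrom S x)
    (hS.subset inter_subset_left)
  set hidden := (S ∩ L) \ visibleFrom S x
  have hblocker : ∀ a ∈ hidden, ∃ r ∈ S, Sbtw ℝ x r a := by
    rintro a ⟨⟨haS, haL⟩, hvis⟩
    by_contra! h
    exact hvis ⟨haS, fun hxa => hxL (hxa ▸ haL), h⟩
  -- distinct hidden points of `L` are hidden by distinct points of `S \ L` other than `x`
  choose! β hβS hβ using hblocker
  have hβL : ∀ a ∈ hidden, β a ∈ (S \ L) \ {x} := fun a ha =>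
    ⟨⟨hβS a ha, fun hrL => hxL (affineSpan_pair_le_of_mem_of_mem ha.1.2 hrL
      (hβ a ha).left_mem_affineSpan)⟩, (hβ a ha).ne_left⟩
  have hβinj : InjOn β hidden := fun a ha a' ha' h => by
    by_contra hne
    exact hxL (L.mem_of_ne_of_mem_affineSpan_pair (hβ a ha).right_mem_affineSpan
      (h ▸ (hβ a' ha').right_mem_affineSpan) hne ha.1.2 ha'.1.2)
  have hhidden := ncard_le_ncard_of_injOn β hβL hβinj hS.sdiff.sdiff
  rw [ncard_sdiff_singleton_of_mem (show x ∈ S \ L from ⟨hxS, hxL⟩)] at hhidden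
  have hpos : 0 < (S \ L).ncard := (ncard_pos hS.sdiff).2 ⟨x, hxS, hxL⟩
  omega

end Visibility

theorem collinear_of_ncard_visibleFrom_le {S T : Set Plane} {d : ℕ} (hS : S.Finite)
    (hTS : T ⊆ S) (hdeg : ∀ x ∈ T, (visibleFrom S x).ncard ≤ d) (hT : d ^ 2 + 1 < T.ncard) :
    Collinear ℝ T := by
  obtain ⟨x, hx⟩ : T.Nonempty := nonempty_of_ncard_ne_zero (by omega)
  have hV : (visibleFrom S x).Finite := hS.subset visibleFrom_subset
  have hT' : (T \ {x}).Finite := (hS.subset hTS).sdiff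
  choose! ray hray hmem using fun y (hy : y ∈ T \ {x}) =>
    exists_mem_visibleFrom_mem_affineSpan_pair hS (hTS hy.1) hy.2
  have hcount : hV.toFinset.card * d < hT'.toFinset.card := by
    rw [← ncard_eq_toFinset_card _ hV, ← ncard_eq_toFinset_card _ hT',
      ncard_sdiff_singleton_of_mem hx]
    have := Nat.mul_le_mul_right d (hdeg x hx)
    rw [sq] at hT
    omega
  obtain ⟨u, -, hfiber⟩ := Finset.exists_lt_card_fiber_of_mul_lt_card_of_maps_to
    (fun y hy => hV.mem_toFinset.2 (hray y (hT'.mem_toFinset.1 hy))) hcount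
  set Y : Set Plane := ↑({y ∈ hT'.toFinset | ray y = u})
  have hY : ∀ y ∈ Y, y ∈ T \ {x} ∧ ray y = u := fun y hy => by
    rwa [Finset.mem_coe, Finset.mem_filter, Finite.mem_toFinset] at hy
  have hYline : Y ⊆ line[ℝ, x, u] := fun y hy => (hY y hy).2 ▸ hmem y (hY y hy).1
  -- a point of `T` off the line `xu` would see more than `d` points
  have hTline : T ⊆ line[ℝ, x, u] := by
    intro x' hx'
    by_contra hx'u
    have := ncard_le_ncard_visibleFrom_of_notMem hS (fun y hy => hTS (hY y hy).1.1) hYline hx'u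
    rw [ncard_coe_finset] at this
    exact absurd (hdeg x' hx') (by omega)
  exact collinear_of_subset_affineSpan (collinear_pair ℝ x u) hTline

namespace VisIso

variable {P P' : Set Plane} {f : Plane → Plane}

theorem image_visibleFrom (hf : VisIso P P' f) {x : Plane} (hx : x ∈ P) :
    f '' visibleFrom P x = visibleFrom P' (f x) := by
  ext y
  constructor
  · rintro ⟨w, ⟨hw, hvis⟩, rfl⟩
    exact ⟨hf.1.mapsTo hw, (hf.2 x hx w hw hvis.1).1 hvis⟩
  · rintro ⟨hy, hvis⟩
    obtain ⟨w, hw, rfl⟩ := hf.1.surjOn hy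
    have hxw : x ≠ w := fun h => hvis.1 (congrArg f h)
    exact ⟨w, ⟨hw, (hf.2 x hx w hw hxw).2 hvis⟩, rfl⟩

theorem ncard_visibleFrom (hf : VisIso P P' f) {x : Plane} (hx : x ∈ P) :
    (visibleFrom P' (f x)).ncard = (visibleFrom P x).ncard := by
  rw [← hf.image_visibleFrom hx, (hf.1.injOn.mono visibleFrom_subset).ncard_image]

end VisIso

/-- Part of Lemma 3 of the paper: if a line `L` contains `k` points of `P` and `l`
points of `P` lie off `L`, with `k ≥ (l + 3)²`, then no point of `P'` outside
`f(P ∩ L)` lies on the affine span of `f(P ∩ L)`, i.e.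
`P' ∩ affineSpan (f(P ∩ L)) = f(P ∩ L)`. -/
theorem no_extra_point_on_image_line (P P' : Set Plane)
    (hP : P.Finite) (hP' : P'.Finite)
    (f : Plane → Plane) (hf : VisIso P P' f)
    (L : AffineSubspace ℝ Plane) (hL : IsLine L)
    (k l : ℕ)
    (hk : k = (P ∩ (L : Set Plane)).ncard)
    (hl : l = (P \ (L : Set Plane)).ncard)
    (hkl : (l + 3) ^ 2 ≤ k) :
    P' ∩ (affineSpan ℝ (f '' (P ∩ (L : Set Plane))) : Set Plane) =
      f '' (P ∩ (L : Set Plane)) := by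
  set A := P ∩ (L : Set Plane)
  have hinj : InjOn f A := hf.1.injOn.mono inter_subset_left
  have hAP' : f '' A ⊆ P' := (hf.1.mapsTo.mono_left inter_subset_left).image_subset
  have hdeg : ∀ y ∈ f '' A, (visibleFrom P' y).ncard ≤ l + 2 := by
    rintro _ ⟨a, ⟨haP, haL⟩, rfl⟩
    rw [hf.ncard_visibleFrom haP, hl]
    exact ncard_visibleFrom_le_ncard_diff_add_two hP hL.collinear haL
  have hcol : Collinear ℝ (f '' A) := collinear_of_ncard_visibleFrom_le hP' hAP' hdeg (by
    rw [hinj.ncard_image, ← hk]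
    nlinarith)
  refine Subset.antisymm ?_ (subset_inter hAP' (subset_affineSpan ℝ _))
  rintro _ ⟨hy, hspan⟩
  obtain ⟨w, hw, rfl⟩ := hf.1.surjOn hy
  by_contra hwA
  have hwL : w ∉ L := fun h => hwA (mem_image_of_mem f ⟨hw, h⟩)
  -- `w` sees at least three points of `A`, whose images are collinear with `f w`
  have hseen : 3 ≤ (A ∩ visibleFrom P w).ncard := by
    have := ncard_inter_add_one_le_ncard_inter_visibleFrom_add hP hw hwL
    nlinarith
  have himage : f '' (A ∩ visibleFrom P w) ⊆ f '' A ∩ visibleFrom P' (f w) :=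
    hf.image_visibleFrom hw ▸ image_inter_subset f _ _
  have hle := ncard_le_ncard himage ((hP'.subset hAP').inter_of_left _)
  rw [(hinj.mono inter_subset_left).ncard_image] at hle
  have htwo := ncard_inter_visibleFrom_le_two (S := P')
    ((collinear_insert_iff_of_mem_affineSpan hspan).2 hcol)
  omega
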